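/- For r ≥ 1, let G_r be the group presented with generators τ_1, …, τ_{r−1} and defining relations: τ_i² = 1 for all i; τ_i τ_j = τ_j τ_i whenever |i − j| > 1; and (τ_i q_{k−1} q_{k−j} q_{k−1})² = 1 whenever i + 1 < j < k ≤ r, where q_m denotes the element τ_1(τ_2τ_1)⋯(τ_mτ_{m−1}⋯τ_1). Then the map s_{i,j} ↦ q_{j−1} q_{j−i} q_{j−1} extends to a group isomorphism from the r-fruit cactus group 𝔠_r to G_r, whose inverse sends τ_1 ↦ s_{1,2}, τ_2 ↦ s_{1,2}s_{1,3}s_{1,2}, and τ_i ↦ s_{1,i}s_{1,i+1}s_{1,i}s_{1,i−1} for i > 2. -/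

import Mathlib

/-- A generator `s_{p,q}` of the `r`-fruit cactus group, indexed by `1 ≤ p < q ≤ r`. -/
structure CactusGen (r : ℕ) where
  p : ℕ
  q : ℕ
  one_le_p : 1 ≤ p
  p_lt_q : p < q
  q_le_r : q ≤ r

/-- The defining relations of the `r`-fruit cactus group:
`s_{p,q}² = 1`; `s_{p,q} s_{k,l} = s_{k,l} s_{p,q}` when the intervals are disjoint;
and `s_{p,q} s_{k,l} = s_{p+q-l,p+q-k} s_{p,q}` when `{k,…,l} ⊆ {p,…,q}`. -/
def cactusRels (r : ℕ) : Set (FreeGroup (CactusGen r)) :=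
  {w | (∃ g : CactusGen r, w = FreeGroup.of g * FreeGroup.of g) ∨
    (∃ g h : CactusGen r, (g.q < h.p ∨ h.q < g.p) ∧
      w = FreeGroup.of g * FreeGroup.of h * (FreeGroup.of h * FreeGroup.of g)⁻¹) ∨
    (∃ (g h : CactusGen r) (_ : g.p ≤ h.p) (_ : h.q ≤ g.q),
      w = FreeGroup.of g * FreeGroup.of h *
        (FreeGroup.of
            ⟨g.p + g.q - h.q, g.p + g.q - h.p,
              by have := g.one_le_p; have := h.p_lt_q; omega,
              by have := h.p_lt_q; have := h.one_le_p; have := g.p_lt_q; omega,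
              by have := h.one_le_p; have := g.q_le_r; omega⟩ *
          FreeGroup.of g)⁻¹)}

/-- The `r`-fruit cactus group, as a presented group. -/
abbrev CactusGroup (r : ℕ) : Type := PresentedGroup (cactusRels r)

/-- The generator `s_{p,q}` of the `r`-fruit cactus group. -/
def cactusS (r p q : ℕ) (h1 : 1 ≤ p) (h2 : p < q) (h3 : q ≤ r) : CactusGroup r :=
  PresentedGroup.of ⟨p, q, h1, h2, h3⟩

/-- A generator `τ_i` (for `1 ≤ i ≤ r - 1`) of the presentation `G_r`. -/
def TauGen (r : ℕ) : Type := {i : ℕ // 1 ≤ i ∧ i ≤ r - 1}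

/-- The letter `τ_i` in the free group (interpreted as `1` for invalid indices). -/
def tauF (r i : ℕ) : FreeGroup (TauGen r) :=
  if h : 1 ≤ i ∧ i ≤ r - 1 then FreeGroup.of ⟨i, h⟩ else 1

/-- The descending word `τ_m τ_{m-1} ⋯ τ_1`. -/
def descWord (r : ℕ) : ℕ → FreeGroup (TauGen r)
  | 0 => 1
  | m + 1 => tauF r (m + 1) * descWord r m

/-- The word `q_m = τ_1 (τ_2 τ_1) ⋯ (τ_m τ_{m-1} ⋯ τ_1)`. -/
def qWord (r : ℕ) : ℕ → FreeGroup (TauGen r)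
  | 0 => 1
  | m + 1 => qWord r m * descWord r (m + 1)

/-- The defining relations of `G_r`: `τ_i² = 1`; `τ_i τ_j = τ_j τ_i` for `|i - j| > 1`;
and `(τ_i q_{k-1} q_{k-j} q_{k-1})² = 1` for `i + 1 < j < k ≤ r`. -/
def bkRels (r : ℕ) : Set (FreeGroup (TauGen r)) :=
  {w | (∃ i : ℕ, 1 ≤ i ∧ i ≤ r - 1 ∧ w = tauF r i * tauF r i) ∨
    (∃ i j : ℕ, 1 ≤ i ∧ i ≤ r - 1 ∧ 1 ≤ j ∧ j ≤ r - 1 ∧ (i + 1 < j ∨ j + 1 < i) ∧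
      w = tauF r i * tauF r j * (tauF r j * tauF r i)⁻¹) ∨
    (∃ i j k : ℕ, 1 ≤ i ∧ i + 1 < j ∧ j < k ∧ k ≤ r ∧
      w = (tauF r i * qWord r (k - 1) * qWord r (k - j) * qWord r (k - 1)) ^ 2)}

/-- The group `G_r` presented by the generators `τ_i` and the above relations. -/
abbrev BKGroup (r : ℕ) : Type := PresentedGroup (bkRels r)

/-- The quotient map from the free group on the `τ_i` to `G_r`. -/
def bkMk (r : ℕ) : FreeGroup (TauGen r) →* BKGroup r := PresentedGroup.mk (bkRels r)

/-- The generator `τ_i` of `G_r`. -/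
def bkTau (r i : ℕ) (h1 : 1 ≤ i) (h2 : i ≤ r - 1) : BKGroup r :=
  PresentedGroup.of ⟨i, h1, h2⟩

/-!
In both groups there are involutions `x_n` (`s_{1,n}` in `𝔠_r`, `q_{n-1}` in `G_r`) and
elements `y_{k,l} = x_l x_{l-k+1} x_l` (which is `s_{k,l}` in `𝔠_r`) such that conjugation by
`x_n` reflects `y_{k,l}` to `y_{n+1-l,n+1-k}` whenever `l ≤ n`. In `𝔠_r` this is a nesting
relation. In `G_r` it follows by induction on `n` from `d_{m+1} q_m d_{m+1} = q_m`, where `d_m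
= τ_m ⋯ τ_1`, an identity that only uses `τ_i² = 1` and far commutativity. Since `y_{p,q}` is
a product of three reflections, the `y_{k,l}` satisfy the nesting relations in `G_r`; the
third family of relations of `G_r` says that `τ_i` commutes with `y_{j,k}` for `i + 1 < j`,
which gives the commutation of disjoint ones. Conversely, the reflections show that
`s_{1,i}s_{1,i+1}s_{1,i}s_{1,i-1}` is an involution commuting with every `s_{p,q}` with `q <
i`, which is what the relations of `G_r` ask for. The two maps are mutually inverse on
generators since `q_{i-1} q_i q_{i-1} q_{i-2} = τ_i`.
-/

section FarCommuting

variable {G : Type*} [Group G]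

theorem commute_of_mul_self_eq_one {a b : G} (ha : a * a = 1) (hb : b * b = 1)
    (hab : a * b * (a * b) = 1) : Commute a b := by
  have h := inv_eq_of_mul_eq_one_right hab
  rwa [mul_inv_rev, inv_eq_of_mul_eq_one_right ha, inv_eq_of_mul_eq_one_right hb, eq_comm] at h

structure FarCommutingInvolutions (t : ℕ → G) : Prop where
  mul_self : ∀ i, t i * t i = 1
  commute : ∀ {i j}, i + 1 < j → Commute (t i) (t j)

def descProd (t : ℕ → G) : ℕ → G
  | 0 => 1
  | m + 1 => t (m + 1) * descProd t m

/-- `q_m`; in `S_{m+1}` it is the longest permutation. -/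
def longestProd (t : ℕ → G) : ℕ → G
  | 0 => 1
  | m + 1 => longestProd t m * descProd t (m + 1)

/-- The image of `s_{k,l}`: the reversal of `k, …, l` as a product of reversals of initial
segments. -/
def cactusElt (t : ℕ → G) (k l : ℕ) : G :=
  longestProd t (l - 1) * longestProd t (l - k) * longestProd t (l - 1)

variable {t : ℕ → G}

theorem descProd_succ (t : ℕ → G) (m : ℕ) :
    descProd t (m + 1) = t (m + 1) * descProd t m := rfl

theorem longestProd_succ (t : ℕ → G) (m : ℕ) :
    longestProd t (m + 1) = longestProd t m * descProd t (m + 1) := rfl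

theorem commute_descProd_of_forall {z : G} {m : ℕ}
    (h : ∀ i, 1 ≤ i → i ≤ m → Commute (t i) z) : Commute (descProd t m) z := by
  induction m with
  | zero => exact Commute.one_left z
  | succ m ih =>
    exact (h (m + 1) (by omega) le_rfl).mul_left (ih fun i hi him => h i hi (by omega))

theorem commute_longestProd_of_forall {z : G} {m : ℕ}
    (h : ∀ i, 1 ≤ i → i ≤ m → Commute (t i) z) : Commute (longestProd t m) z := by
  induction m with
  | zero => exact Commute.one_left z
  | succ m ih =>
    exact (ih fun i hi him => h i hi (by omega)).mul_left (commute_descProd_of_forall h)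

theorem commute_cactusElt_of_forall {z : G} {k l : ℕ} (hk : 1 ≤ k)
    (h : ∀ i, 1 ≤ i → i < l → Commute (t i) z) : Commute (cactusElt t k l) z := by
  have hq : ∀ m, m ≤ l - 1 → Commute (longestProd t m) z := fun m hm =>
    commute_longestProd_of_forall fun i hi him => h i hi (by omega)
  exact ((hq _ (by omega)).mul_left (hq _ (by omega))).mul_left (hq _ (by omega))

namespace FarCommutingInvolutions

theorem commute_longestProd (ht : FarCommutingInvolutions t) {i m : ℕ} (h : m + 2 ≤ i) :
    Commute (t i) (longestProd t m) :=
  (commute_longestProd_of_forall fun _ _ hj => ht.commute (by omega)).symm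

theorem descProd_mul_longestProd_mul_descProd (ht : FarCommutingInvolutions t) (m : ℕ) :
    descProd t (m + 1) * longestProd t m * descProd t (m + 1) = longestProd t m := by
  induction m with
  | zero => simp [descProd, longestProd, ht.mul_self]
  | succ m ih =>
    have hc : Commute (t (m + 2)) (longestProd t m) := ht.commute_longestProd le_rfl
    rw [descProd_succ t (m + 1), longestProd_succ]
    calc t (m + 2) * descProd t (m + 1) * (longestProd t m * descProd t (m + 1)) *
          (t (m + 2) * descProd t (m + 1))
        = t (m + 2) * (descProd t (m + 1) * longestProd t m * descProd t (m + 1)) *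
            t (m + 2) * descProd t (m + 1) := by simp only [mul_assoc]
      _ = longestProd t m * (t (m + 2) * t (m + 2)) * descProd t (m + 1) := by
            rw [ih, hc.eq]; simp only [mul_assoc]
      _ = longestProd t m * descProd t (m + 1) := by rw [ht.mul_self, mul_one]

theorem longestProd_mul_self (ht : FarCommutingInvolutions t) (m : ℕ) :
    longestProd t m * longestProd t m = 1 := by
  induction m with
  | zero => exact mul_one 1
  | succ m ih =>
    rw [longestProd_succ, mul_assoc, ← mul_assoc (descProd t (m + 1)),
      ht.descProd_mul_longestProd_mul_descProd, ih]

theorem descProd_mul_longestProd_succ (ht : FarCommutingInvolutions t) (m : ℕ) :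
    descProd t (m + 1) * longestProd t (m + 1) = longestProd t m := by
  rw [longestProd_succ, ← mul_assoc, ht.descProd_mul_longestProd_mul_descProd]

theorem cactusElt_one_left (ht : FarCommutingInvolutions t) (l : ℕ) :
    cactusElt t 1 l = longestProd t (l - 1) := by
  rw [cactusElt, ht.longestProd_mul_self, one_mul]

theorem cactusElt_mul_self (ht : FarCommutingInvolutions t) (k l : ℕ) :
    cactusElt t k l * cactusElt t k l = 1 := by
  simp only [cactusElt, mul_assoc, ← mul_assoc (longestProd t (l - 1)) (longestProd t (l - 1)),
    ht.longestProd_mul_self, one_mul]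
  simp only [← mul_assoc, ht.longestProd_mul_self, one_mul]

theorem semiconjBy_descProd_cactusElt (ht : FarCommutingInvolutions t) {k l n : ℕ} (hk : 1 ≤ k)
    (hl : 1 ≤ l) (hln : l ≤ n) :
    SemiconjBy (descProd t n) (cactusElt t (k + 1) (l + 1)) (cactusElt t k l) := by
  induction n, hln using Nat.le_induction with
  | base =>
    obtain ⟨m, rfl⟩ : ∃ m, l = m + 1 := ⟨l - 1, by omega⟩
    simp only [SemiconjBy, cactusElt, Nat.add_sub_cancel, Nat.add_sub_add_right]
    rw [← mul_assoc, ← mul_assoc, ht.descProd_mul_longestProd_succ, longestProd_succ t m,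
      ← mul_assoc]
  | succ n hln ih =>
    refine SemiconjBy.mul_left ?_ ih
    exact (commute_cactusElt_of_forall hk fun i _ hi => ht.commute (by omega)).symm

theorem semiconjBy_longestProd_cactusElt (ht : FarCommutingInvolutions t) {n k l k' l' : ℕ}
    (hk : 1 ≤ k) (hkl : k ≤ l) (hl : l ≤ n + 1) (hk' : k' + l = n + 2)
    (hl' : l' + k = n + 2) :
    SemiconjBy (longestProd t n) (cactusElt t k l) (cactusElt t k' l') := by
  induction n using Nat.strong_induction_on generalizing k l k' l' with
  | _ n ih =>
    rcases (show k = 1 ∨ l = n + 1 ∨ (2 ≤ k ∧ l ≤ n) by omega) with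
      rfl | rfl | ⟨hk2, hln⟩
    · obtain rfl : l' = n + 1 := by omega
      rw [ht.cactusElt_one_left, cactusElt, Nat.add_sub_cancel, show n + 1 - k' = l - 1 by omega]
      simp only [SemiconjBy, mul_assoc, ht.longestProd_mul_self, mul_one]
    · obtain rfl : k' = 1 := by omega
      rw [ht.cactusElt_one_left, cactusElt, Nat.add_sub_cancel, show l' - 1 = n + 1 - k by omega]
      simp only [SemiconjBy, ← mul_assoc, ht.longestProd_mul_self, one_mul]
    · obtain ⟨m, rfl⟩ : ∃ m, n = m + 1 := ⟨n - 1, by omega⟩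
      obtain ⟨a, rfl⟩ : ∃ a, k = a + 1 := ⟨k - 1, by omega⟩
      obtain ⟨b, rfl⟩ : ∃ b, l = b + 1 := ⟨l - 1, by omega⟩
      rw [longestProd_succ]
      exact (ih m (by omega) (by omega) (by omega) (by omega) (by omega) (by omega)).mul_left
        (ht.semiconjBy_descProd_cactusElt (by omega) (by omega) (by omega))

theorem semiconjBy_cactusElt (ht : FarCommutingInvolutions t) {p q k l k' l' : ℕ} (hp : 1 ≤ p)
    (hpk : p ≤ k) (hkl : k ≤ l) (hlq : l ≤ q) (hk' : k' + l = p + q) (hl' : l' + k = p + q) :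
    SemiconjBy (cactusElt t p q) (cactusElt t k l) (cactusElt t k' l') :=
  (((ht.semiconjBy_longestProd_cactusElt (n := q - 1) (k := k - p + 1) (l := l - p + 1)
      (by omega) (by omega) (by omega) (by omega) (by omega)).mul_left
    (ht.semiconjBy_longestProd_cactusElt (n := q - p) (k := q + 1 - l) (l := q + 1 - k)
      (by omega) (by omega) (by omega) (by omega) (by omega))).mul_left
    (ht.semiconjBy_longestProd_cactusElt (n := q - 1) (k := k) (l := l)
      (by omega) hkl (by omega) (by omega) (by omega)))

theorem apply_eq_longestProd (ht : FarCommutingInvolutions t) {i : ℕ} (hi : 1 ≤ i) :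
    t i = longestProd t (i - 1) * longestProd t i * longestProd t (i - 1) *
      longestProd t (i - 2) := by
  obtain ⟨m, rfl⟩ : ∃ m, i = m + 1 := ⟨i - 1, by omega⟩
  rw [Nat.add_sub_cancel, longestProd_succ, ← mul_assoc, ht.longestProd_mul_self, one_mul]
  cases m with
  | zero => simp [descProd, longestProd]
  | succ m =>
    rw [descProd_succ, mul_assoc (t _), ht.descProd_mul_longestProd_succ,
      show m + 1 + 1 - 2 = m by omega, mul_assoc, ht.longestProd_mul_self, mul_one]

end FarCommutingInvolutions

end FarCommuting

namespace CactusGroup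

/-- `s_{p,q}`, extended by `1` to all `p q` outside `1 ≤ p < q ≤ r`: the degenerate `s_{1,1}`
and `s_{1,0}` occur in the images of `τ_1` and `τ_2`. -/
noncomputable def s (r p q : ℕ) : CactusGroup r :=
  if h : 1 ≤ p ∧ p < q ∧ q ≤ r then cactusS r p q h.1 h.2.1 h.2.2 else 1

variable {r : ℕ}

theorem s_eq_cactusS {p q : ℕ} (h1 : 1 ≤ p) (h2 : p < q) (h3 : q ≤ r) :
    s r p q = cactusS r p q h1 h2 h3 :=
  dif_pos ⟨h1, h2, h3⟩

theorem s_of_not {p q : ℕ} (h : ¬(1 ≤ p ∧ p < q ∧ q ≤ r)) : s r p q = 1 := dif_neg h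

theorem s_mul_self (p q : ℕ) : s r p q * s r p q = 1 := by
  by_cases h : 1 ≤ p ∧ p < q ∧ q ≤ r
  · rw [s_eq_cactusS h.1 h.2.1 h.2.2]
    exact PresentedGroup.one_of_mem (Or.inl ⟨_, rfl⟩)
  · rw [s_of_not h, mul_one]

theorem s_mul_s_mul (p q : ℕ) (x : CactusGroup r) : s r p q * (s r p q * x) = x := by
  rw [← mul_assoc, s_mul_self, one_mul]

theorem commute_s_s {p q k l : ℕ} (hqk : q < k) : Commute (s r p q) (s r k l) := by
  by_cases h : 1 ≤ p ∧ p < q ∧ q ≤ r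
  · by_cases h' : 1 ≤ k ∧ k < l ∧ l ≤ r
    · rw [s_eq_cactusS h.1 h.2.1 h.2.2, s_eq_cactusS h'.1 h'.2.1 h'.2.2]
      exact mul_inv_eq_one.mp (PresentedGroup.one_of_mem
        (Or.inr (Or.inl ⟨⟨p, q, _, _, _⟩, ⟨k, l, _, _, _⟩, Or.inl hqk, rfl⟩)))
    · rw [s_of_not h']
      exact Commute.one_right _
  · rw [s_of_not h]
    exact Commute.one_left _

theorem semiconjBy_s_s {p q k l k' l' : ℕ} (hp : 1 ≤ p) (hpk : p ≤ k) (hlq : l ≤ q)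
    (hq : q ≤ r) (hk' : k' + l = p + q) (hl' : l' + k = p + q) :
    SemiconjBy (s r p q) (s r k l) (s r k' l') := by
  by_cases hkl : k < l
  · obtain rfl : k' = p + q - l := by omega
    obtain rfl : l' = p + q - k := by omega
    rw [s_eq_cactusS hp (by omega) hq, s_eq_cactusS (by omega) hkl (by omega),
      s_eq_cactusS (by omega) (by omega) (by omega)]
    exact mul_inv_eq_one.mp (PresentedGroup.one_of_mem
      (Or.inr (Or.inr ⟨⟨p, q, _, _, _⟩, ⟨k, l, _, _, _⟩, hpk, hlq, rfl⟩)))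
  · rw [s_of_not (by omega : ¬(1 ≤ k ∧ k < l ∧ l ≤ r)),
      s_of_not (by omega : ¬(1 ≤ k' ∧ k' < l' ∧ l' ≤ r))]
    exact SemiconjBy.one_right _

theorem s_one_mul_s_one_mul_s_one {p q : ℕ} (hp : 1 ≤ p) (hpq : p ≤ q) (hq : q ≤ r) :
    s r 1 q * s r 1 (q - p + 1) * s r 1 q = s r p q := by
  rw [(semiconjBy_s_s (l := q - p + 1) (k' := p) (l' := q) le_rfl le_rfl (by omega) hq
    (by omega) (by omega)).eq, mul_assoc, s_mul_self, mul_one]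

noncomputable def tauImage (r i : ℕ) : CactusGroup r :=
  s r 1 i * s r 1 (i + 1) * s r 1 i * s r 1 (i - 1)

theorem commute_tauImage_of_forall {i : ℕ} {z : CactusGroup r}
    (h : ∀ m, m ≤ i + 1 → Commute (s r 1 m) z) : Commute (tauImage r i) z :=
  (((h i (by omega)).mul_left (h (i + 1) le_rfl)).mul_left (h i (by omega))).mul_left
    (h (i - 1) (by omega))

theorem tauImage_mul_self {i : ℕ} (hi : 1 ≤ i) (hir : i + 1 ≤ r) :
    tauImage r i * tauImage r i = 1 := by
  have hac : SemiconjBy (s r 1 i) (s r 1 (i - 1)) (s r 2 i) :=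
    semiconjBy_s_s le_rfl le_rfl (by omega) (by omega) (by omega) (by omega)
  have haw : SemiconjBy (s r 1 i) (s r 2 i) (s r 1 (i - 1)) :=
    semiconjBy_s_s le_rfl (by omega) le_rfl (by omega) (by omega) (by omega)
  have hbw : Commute (s r 1 (i + 1)) (s r 2 i) :=
    semiconjBy_s_s le_rfl (by omega) (by omega) hir (by omega) (by omega)
  -- `s_{1,i}` conjugates `s_{1,i-1}` to `s_{2,i}`, which `s_{1,i+1}` fixes
  have hc : Commute (s r 1 i * s r 1 (i + 1) * s r 1 i) (s r 1 (i - 1)) :=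
    (haw.mul_left hbw).mul_left hac
  rw [tauImage, ← sq, hc.mul_pow, sq, sq, s_mul_self, mul_one]
  simp only [mul_assoc, s_mul_s_mul, s_mul_self]

theorem commute_tauImage_s {j p q : ℕ} (hp : 1 ≤ p) (hqj : q < j) (hj : j + 1 ≤ r) :
    Commute (tauImage r j) (s r p q) := by
  rcases le_or_gt p q with hpq | hqp
  -- the four reflections move `[p, q]` to `[j-q, j-p]`, `[p+1, q+1]`, `[j+1-q, j+1-p]`, `[p, q]`
  · exact (((semiconjBy_s_s (k := j + 1 - q) (l := j + 1 - p) le_rfl (by omega) (by omega)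
        (by omega) (by omega) (by omega)).mul_left
      (semiconjBy_s_s (k := p + 1) (l := q + 1) le_rfl (by omega) (by omega) hj
        (by omega) (by omega))).mul_left
      (semiconjBy_s_s (k := j - q) (l := j - p) le_rfl (by omega) (by omega) (by omega)
        (by omega) (by omega))).mul_left
      (semiconjBy_s_s (k := p) (l := q) le_rfl hp (by omega) (by omega) (by omega) (by omega))
  · rw [s_of_not (by omega)]
    exact Commute.one_right _

end CactusGroup

namespace BKGroup

variable {r : ℕ}

noncomputable def tau (r i : ℕ) : BKGroup r := bkMk r (tauF r i)

theorem bkMk_tauF (i : ℕ) : bkMk r (tauF r i) = tau r i := rfl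

theorem tau_of_not {i : ℕ} (h : ¬(1 ≤ i ∧ i ≤ r - 1)) : tau r i = 1 := by
  rw [tau, tauF, dif_neg h, map_one]

theorem tau_eq_bkTau {i : ℕ} (h1 : 1 ≤ i) (h2 : i ≤ r - 1) : tau r i = bkTau r i h1 h2 := by
  rw [tau, tauF, dif_pos ⟨h1, h2⟩]
  rfl

theorem farCommutingInvolutions_tau (r : ℕ) : FarCommutingInvolutions (tau r) where
  mul_self i := by
    by_cases h : 1 ≤ i ∧ i ≤ r - 1
    · rw [tau, ← map_mul]
      exact PresentedGroup.one_of_mem (Or.inl ⟨i, h.1, h.2, rfl⟩)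
    · rw [tau_of_not h, mul_one]
  commute {i j} hij := by
    by_cases hi : 1 ≤ i ∧ i ≤ r - 1
    · by_cases hj : 1 ≤ j ∧ j ≤ r - 1
      · have h : bkMk r (tauF r i * tauF r j * (tauF r j * tauF r i)⁻¹) = 1 :=
          PresentedGroup.one_of_mem
            (Or.inr (Or.inl ⟨i, j, hi.1, hi.2, hj.1, hj.2, Or.inl hij, rfl⟩))
        rwa [map_mul, map_inv, map_mul, map_mul, mul_inv_eq_one] at h
      · rw [tau_of_not hj]
        exact Commute.one_right _
    · rw [tau_of_not hi]
      exact Commute.one_left _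

theorem bkMk_descWord (m : ℕ) : bkMk r (descWord r m) = descProd (tau r) m := by
  induction m with
  | zero => exact map_one _
  | succ m ih => rw [descWord, map_mul, ih]; rfl

theorem bkMk_qWord (m : ℕ) : bkMk r (qWord r m) = longestProd (tau r) m := by
  induction m with
  | zero => exact map_one _
  | succ m ih => rw [qWord, map_mul, ih, bkMk_descWord]; rfl

theorem commute_tau_cactusElt {i j k : ℕ} (hi : 1 ≤ i) (hij : i + 1 < j) (hjk : j < k)
    (hk : k ≤ r) : Commute (tau r i) (cactusElt (tau r) j k) := by
  have ht := farCommutingInvolutions_tau r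
  have h : bkMk r ((tauF r i * qWord r (k - 1) * qWord r (k - j) * qWord r (k - 1)) ^ 2) = 1 :=
    PresentedGroup.one_of_mem (Or.inr (Or.inr ⟨i, j, k, hi, hij, hjk, hk, rfl⟩))
  simp only [map_mul, bkMk_tauF, bkMk_qWord, sq] at h
  refine commute_of_mul_self_eq_one (ht.mul_self i) (ht.cactusElt_mul_self j k) ?_
  simpa only [cactusElt, mul_assoc] using h

theorem commute_cactusElt_cactusElt {p q k l : ℕ} (hp : 1 ≤ p) (hqk : q < k) (hkl : k < l)
    (hl : l ≤ r) : Commute (cactusElt (tau r) p q) (cactusElt (tau r) k l) :=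
  commute_cactusElt_of_forall hp fun _ hi _ => commute_tau_cactusElt hi (by omega) hkl hl

end BKGroup

namespace CactusGroup

open BKGroup

variable {r : ℕ}

theorem lift_cactusRels_eq_one (r : ℕ) :
    ∀ w ∈ cactusRels r,
      FreeGroup.lift (fun g : CactusGen r => cactusElt (tau r) g.p g.q) w = 1 := by
  have ht := farCommutingInvolutions_tau r
  rintro w (⟨g, rfl⟩ | ⟨g, h, hd, rfl⟩ | ⟨g, h, hpk, hlq, rfl⟩)
  · simpa only [map_mul, FreeGroup.lift_apply_of] using ht.cactusElt_mul_self g.p g.q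
  · simp only [map_mul, map_inv, FreeGroup.lift_apply_of, mul_inv_eq_one]
    rcases hd with hd | hd
    · exact (commute_cactusElt_cactusElt g.one_le_p hd h.p_lt_q h.q_le_r).eq
    · exact (commute_cactusElt_cactusElt h.one_le_p hd g.p_lt_q g.q_le_r).symm.eq
  · simp only [map_mul, map_inv, FreeGroup.lift_apply_of, mul_inv_eq_one]
    have hkl := h.p_lt_q
    exact (ht.semiconjBy_cactusElt g.one_le_p hpk hkl.le hlq (by omega) (by omega)).eq

noncomputable def toBKGroup (r : ℕ) : CactusGroup r →* BKGroup r :=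
  PresentedGroup.toGroup (lift_cactusRels_eq_one r)

theorem toBKGroup_cactusS {p q : ℕ} (h1 : 1 ≤ p) (h2 : p < q) (h3 : q ≤ r) :
    toBKGroup r (cactusS r p q h1 h2 h3) = cactusElt (tau r) p q :=
  PresentedGroup.toGroup.of _

theorem toBKGroup_s_one {n : ℕ} (hn : n ≤ r) :
    toBKGroup r (s r 1 n) = longestProd (tau r) (n - 1) := by
  by_cases h : 2 ≤ n
  · rw [s_eq_cactusS le_rfl h hn, toBKGroup_cactusS,
      (farCommutingInvolutions_tau r).cactusElt_one_left]
  · rw [s_of_not (by omega), map_one, show n - 1 = 0 by omega]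
    rfl

end CactusGroup

namespace BKGroup

open CactusGroup

variable {r : ℕ}

theorem lift_tauF {i : ℕ} (h1 : 1 ≤ i) (h2 : i + 1 ≤ r) :
    FreeGroup.lift (fun x : TauGen r => tauImage r x.1) (tauF r i) = tauImage r i := by
  rw [tauF, dif_pos ⟨h1, by omega⟩]
  exact FreeGroup.lift_apply_of

theorem lift_descWord {m : ℕ} (hm : m + 1 ≤ r) :
    FreeGroup.lift (fun x : TauGen r => tauImage r x.1) (descWord r m) =
      s r 1 m * s r 1 (m + 1) := by
  induction m with
  | zero => rw [descWord, map_one, s_of_not (by omega), s_of_not (by omega), one_mul]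
  | succ m ih =>
    rw [descWord, map_mul, lift_tauF (by omega) hm, ih (by omega), tauImage, Nat.add_sub_cancel]
    simp only [mul_assoc, s_mul_s_mul, s_mul_self, mul_one]

theorem lift_qWord {m : ℕ} (hm : m + 1 ≤ r) :
    FreeGroup.lift (fun x : TauGen r => tauImage r x.1) (qWord r m) = s r 1 (m + 1) := by
  induction m with
  | zero => rw [qWord, map_one, s_of_not (by omega)]
  | succ m ih =>
    rw [qWord, map_mul, ih (by omega), lift_descWord hm, ← mul_assoc, s_mul_self, one_mul]

theorem lift_bkRels_eq_one (r : ℕ) :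
    ∀ w ∈ bkRels r, FreeGroup.lift (fun x : TauGen r => tauImage r x.1) w = 1 := by
  rintro w (⟨i, h1, h2, rfl⟩ | ⟨i, j, hi1, hi2, hj1, hj2, hij, rfl⟩ |
    ⟨i, j, k, hi, hij, hjk, hk, rfl⟩)
  · rw [map_mul, lift_tauF h1 (by omega)]
    exact tauImage_mul_self h1 (by omega)
  · rw [map_mul, map_inv, map_mul, map_mul, lift_tauF hi1 (by omega), lift_tauF hj1 (by omega),
      mul_inv_eq_one]
    have hcomm : ∀ {a b}, a + 1 < b → b + 1 ≤ r → Commute (tauImage r a) (tauImage r b) :=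
      fun hab hb => commute_tauImage_of_forall fun _ _ =>
        (commute_tauImage_s le_rfl (by omega) hb).symm
    rcases hij with hij | hij
    · exact (hcomm hij (by omega)).eq
    · exact (hcomm hij (by omega)).symm.eq
  · rw [map_pow, map_mul, map_mul, map_mul, lift_tauF hi (by omega), lift_qWord (by omega),
      lift_qWord (by omega), Nat.sub_add_cancel (by omega : 1 ≤ k)]
    have hs := s_one_mul_s_one_mul_s_one (by omega) hjk.le hk
    simp only [mul_assoc] at hs ⊢
    rw [hs]
    have hc : Commute (tauImage r i) (s r j k) :=
      commute_tauImage_of_forall fun _ _ => commute_s_s (by omega)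
    rw [hc.mul_pow, sq, sq, tauImage_mul_self hi (by omega), s_mul_self, one_mul]

noncomputable def toCactusGroup (r : ℕ) : BKGroup r →* CactusGroup r :=
  PresentedGroup.toGroup (lift_bkRels_eq_one r)

theorem toCactusGroup_bkTau {i : ℕ} (h1 : 1 ≤ i) (h2 : i ≤ r - 1) :
    toCactusGroup r (bkTau r i h1 h2) = tauImage r i :=
  PresentedGroup.toGroup.of _

theorem toCactusGroup_longestProd {m : ℕ} (hm : m + 1 ≤ r) :
    toCactusGroup r (longestProd (tau r) m) = s r 1 (m + 1) := by
  rw [← bkMk_qWord]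
  exact lift_qWord hm

end BKGroup

open CactusGroup BKGroup

theorem toCactusGroup_comp_toBKGroup (r : ℕ) :
    (toCactusGroup r).comp (toBKGroup r) = MonoidHom.id (CactusGroup r) := by
  refine PresentedGroup.ext fun ⟨p, q, hp, hpq, hq⟩ => ?_
  rw [MonoidHom.comp_apply, MonoidHom.id_apply, ← cactusS, toBKGroup_cactusS, cactusElt,
    map_mul, map_mul, toCactusGroup_longestProd (by omega), toCactusGroup_longestProd (by omega),
    Nat.sub_add_cancel (by omega : 1 ≤ q), s_one_mul_s_one_mul_s_one hp hpq.le hq,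
    s_eq_cactusS hp hpq hq]

theorem toBKGroup_comp_toCactusGroup (r : ℕ) :
    (toBKGroup r).comp (toCactusGroup r) = MonoidHom.id (BKGroup r) := by
  refine PresentedGroup.ext fun ⟨i, hi, hir⟩ => ?_
  rw [MonoidHom.comp_apply, MonoidHom.id_apply, ← bkTau, toCactusGroup_bkTau, tauImage,
    map_mul, map_mul, map_mul, toBKGroup_s_one (by omega), toBKGroup_s_one (by omega),
    toBKGroup_s_one (by omega), Nat.add_sub_cancel, show i - 1 - 1 = i - 2 by omega,
    ← (farCommutingInvolutions_tau r).apply_eq_longestProd hi, tau_eq_bkTau hi hir]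

noncomputable def cactusEquivBKGroup (r : ℕ) : CactusGroup r ≃* BKGroup r :=
  (toBKGroup r).toMulEquiv (toCactusGroup r) (toCactusGroup_comp_toBKGroup r)
    (toBKGroup_comp_toCactusGroup r)

/-- The map `s_{i,j} ↦ q_{j-1} q_{j-i} q_{j-1}` extends to an isomorphism
`𝔠_r ≃ G_r`, whose inverse sends `τ_1 ↦ s_{1,2}`, `τ_2 ↦ s_{1,2} s_{1,3} s_{1,2}`,
and `τ_i ↦ s_{1,i} s_{1,i+1} s_{1,i} s_{1,i-1}` for `i > 2`. -/
theorem cactus_iso_bk (r : ℕ) :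
    ∃ φ : CactusGroup r ≃* BKGroup r,
      (∀ (i j : ℕ) (h1 : 1 ≤ i) (h2 : i < j) (h3 : j ≤ r),
        φ (cactusS r i j h1 h2 h3) =
          bkMk r (qWord r (j - 1) * qWord r (j - i) * qWord r (j - 1))) ∧
      (∀ h2r : 2 ≤ r,
        φ.symm (bkTau r 1 le_rfl (by omega)) = cactusS r 1 2 le_rfl one_lt_two h2r) ∧
      (∀ h3r : 3 ≤ r,
        φ.symm (bkTau r 2 one_le_two (by omega)) =
          cactusS r 1 2 le_rfl one_lt_two (by omega) *
            cactusS r 1 3 le_rfl (by omega) h3r *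
              cactusS r 1 2 le_rfl one_lt_two (by omega)) ∧
      (∀ (i : ℕ) (hi : 3 ≤ i) (hir : i ≤ r - 1),
        φ.symm (bkTau r i (by omega) hir) =
          cactusS r 1 i le_rfl (by omega) (by omega) *
            cactusS r 1 (i + 1) le_rfl (by omega) (by omega) *
              cactusS r 1 i le_rfl (by omega) (by omega) *
                cactusS r 1 (i - 1) le_rfl (by omega) (by omega)) := by
  refine ⟨cactusEquivBKGroup r, fun i j h1 h2 h3 => ?_, fun h2r => ?_, fun h3r => ?_,
    fun i hi hir => ?_⟩
  · rw [map_mul, map_mul, bkMk_qWord, bkMk_qWord]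
    exact toBKGroup_cactusS h1 h2 h3
  all_goals
    rw [cactusEquivBKGroup, MonoidHom.toMulEquiv_symm_apply, toCactusGroup_bkTau, tauImage]
  · show s r 1 1 * s r 1 2 * s r 1 1 * s r 1 0 = _
    rw [s_of_not (p := 1) (q := 1) (by omega), s_of_not (p := 1) (q := 0) (by omega),
      s_eq_cactusS le_rfl one_lt_two h2r, one_mul, mul_one, mul_one]
  · show s r 1 2 * s r 1 3 * s r 1 2 * s r 1 1 = _
    rw [s_of_not (p := 1) (q := 1) (by omega), s_eq_cactusS le_rfl one_lt_two (by omega),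
      s_eq_cactusS le_rfl (by omega) h3r, mul_one]
  · rw [s_eq_cactusS le_rfl (by omega) (by omega), s_eq_cactusS le_rfl (by omega) (by omega),
      s_eq_cactusS le_rfl (by omega) (by omega)]
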